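/- arXiv:0801.4733 — 2 statements merged into one kernel-verified Lean document; each statement's English description precedes it below -/
import Mathlib

section
/- Fix integers n ≥ 1, d, g ≥ 1 and a bound M ≥ 0. Then the set of Harder–Narasimhan types of rank n and degree d, i.e. tuples (r, (n_1,…,n_r), (d_1,…,d_r)) with r ≥ 1, positive integers n_j summing to n, integers d_j summing to d and strictly decreasing slopes d_1/n_1 > … > d_r/n_r, whose codimension c_μ = Σ_{1 ≤ j < ℓ ≤ r} ( n_ℓ d_j − n_j d_ℓ + n_ℓ n_j (g−1) ) satisfies c_μ ≤ M, is finite. (Hence for every M > 0 there are only finitely many Yang–Mills strata of codimension at most M, even though the total number of strata is countably infinite.) -/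
lemma aux_fin {α : Type*} (N : ℕ) (S : Set α) (hS : S.Finite) :
    {p : Σ r : ℕ, Fin r → α | p.1 ≤ N ∧ ∀ j, p.2 j ∈ S}.Finite := by
  have hsub : {p : Σ r : ℕ, Fin r → α | p.1 ≤ N ∧ ∀ j, p.2 j ∈ S} ⊆
      ⋃ r ∈ Finset.range (N + 1), (Sigma.mk r '' {f : Fin r → α | ∀ j, f j ∈ S}) := by
    rintro ⟨r, f⟩ ⟨hr, hf⟩
    simp only [Set.mem_iUnion]
    exact ⟨r, by simpa using Nat.lt_succ_of_le hr, f, hf, rfl⟩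
  refine Set.Finite.subset ?_ hsub
  apply Set.Finite.biUnion (Finset.finite_toSet _)
  intro r _
  have : {f : Fin r → α | ∀ j, f j ∈ S} = Set.pi Set.univ (fun _ => S) := by
    ext f; simp [Set.mem_pi]
  rw [this]
  exact (Set.Finite.pi (fun _ => hS)).image _

/-- For fixed `n ≥ 1`, `d`, `g ≥ 1` and a bound `M ≥ 0`, the set of
Harder–Narasimhan types of rank `n` and degree `d` (tuples `(r, (n_j), (d_j))` with
`r ≥ 1`, positive `n_j` summing to `n`, integers `d_j` summing to `d` and strictly
decreasing slopes) whose codimension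
`c_μ = ∑_{j < ℓ} (n_ℓ d_j − n_j d_ℓ + n_ℓ n_j (g−1))` is at most `M` is finite. -/
theorem stmt_3 (n : ℤ) (hn : 1 ≤ n) (d : ℤ) (g : ℤ) (hg : 1 ≤ g) (M : ℤ) (hM : 0 ≤ M) :
    {p : Σ r : ℕ, Fin r → ℤ × ℤ |
        1 ≤ p.1
      ∧ (∀ j, 0 < (p.2 j).1)
      ∧ (∑ j, (p.2 j).1) = n
      ∧ (∑ j, (p.2 j).2) = d
      ∧ (∀ j ℓ : Fin p.1, j < ℓ →
          (((p.2 ℓ).2 : ℚ) / ((p.2 ℓ).1 : ℚ)) < (((p.2 j).2 : ℚ) / ((p.2 j).1 : ℚ)))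
      ∧ (∑ j : Fin p.1, ∑ ℓ ∈ Finset.univ.filter (fun ℓ : Fin p.1 => j < ℓ),
            ((p.2 ℓ).1 * (p.2 j).2 - (p.2 j).1 * (p.2 ℓ).2
              + (p.2 ℓ).1 * (p.2 j).1 * (g - 1))) ≤ M}.Finite := by
  set B : ℤ := |d| + n * M with hB
  have hsub : {p : Σ r : ℕ, Fin r → ℤ × ℤ |
        1 ≤ p.1
      ∧ (∀ j, 0 < (p.2 j).1)
      ∧ (∑ j, (p.2 j).1) = n
      ∧ (∑ j, (p.2 j).2) = d
      ∧ (∀ j ℓ : Fin p.1, j < ℓ →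
          (((p.2 ℓ).2 : ℚ) / ((p.2 ℓ).1 : ℚ)) < (((p.2 j).2 : ℚ) / ((p.2 j).1 : ℚ)))
      ∧ (∑ j : Fin p.1, ∑ ℓ ∈ Finset.univ.filter (fun ℓ : Fin p.1 => j < ℓ),
            ((p.2 ℓ).1 * (p.2 j).2 - (p.2 j).1 * (p.2 ℓ).2
              + (p.2 ℓ).1 * (p.2 j).1 * (g - 1))) ≤ M} ⊆
      {p : Σ r : ℕ, Fin r → ℤ × ℤ | p.1 ≤ n.toNat ∧
        ∀ j, p.2 j ∈ Set.Icc ((1 : ℤ), -B) (n, B)} := by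
    rintro ⟨r, f⟩ ⟨hr, hpos, hsn, hsd, hslope, hcodim⟩
    dsimp only at *
    -- r ≤ n
    have hrn : (r : ℤ) ≤ n := by
      rw [← hsn]
      calc (r : ℤ) = ∑ _j : Fin r, 1 := by simp
        _ ≤ ∑ j, (f j).1 := Finset.sum_le_sum fun j _ => hpos j
    -- each n_j ≤ n
    have hnle : ∀ j, (f j).1 ≤ n := by
      intro j
      rw [← hsn]
      exact Finset.single_le_sum (fun i _ => (hpos i).le) (Finset.mem_univ j)
    -- cross term positive
    have hcross : ∀ j ℓ : Fin r, j < ℓ → 0 < (f ℓ).1 * (f j).2 - (f j).1 * (f ℓ).2 := by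
      intro j ℓ hjl
      have h := hslope j ℓ hjl
      rw [div_lt_div_iff₀ (by exact_mod_cast hpos ℓ) (by exact_mod_cast hpos j)] at h
      have : (f ℓ).2 * (f j).1 < (f j).2 * (f ℓ).1 := by exact_mod_cast h
      linarith
    -- each summand nonneg
    have hterm_nonneg : ∀ j ℓ : Fin r, j < ℓ →
        0 ≤ (f ℓ).1 * (f j).2 - (f j).1 * (f ℓ).2 + (f ℓ).1 * (f j).1 * (g - 1) := by
      intro j ℓ hjl
      have := hcross j ℓ hjl
      have h2 : 0 ≤ (f ℓ).1 * (f j).1 * (g - 1) :=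
        mul_nonneg (mul_nonneg (hpos ℓ).le (hpos j).le) (by linarith)
      linarith
    -- each cross term ≤ M
    have hcM : ∀ j ℓ : Fin r, j < ℓ → (f ℓ).1 * (f j).2 - (f j).1 * (f ℓ).2 ≤ M := by
      intro j ℓ hjl
      have hinner : ∀ j' : Fin r, 0 ≤ ∑ ℓ' ∈ Finset.univ.filter (fun ℓ' : Fin r => j' < ℓ'),
          ((f ℓ').1 * (f j').2 - (f j').1 * (f ℓ').2 + (f ℓ').1 * (f j').1 * (g - 1)) :=
        fun j' => Finset.sum_nonneg fun ℓ' hℓ' =>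
          hterm_nonneg j' ℓ' (Finset.mem_filter.1 hℓ').2
      have h1 : ((f ℓ).1 * (f j).2 - (f j).1 * (f ℓ).2 + (f ℓ).1 * (f j).1 * (g - 1)) ≤
          ∑ ℓ' ∈ Finset.univ.filter (fun ℓ' : Fin r => j < ℓ'),
          ((f ℓ').1 * (f j).2 - (f j).1 * (f ℓ').2 + (f ℓ').1 * (f j).1 * (g - 1)) :=
        Finset.single_le_sum (fun ℓ' hℓ' => hterm_nonneg j ℓ' (Finset.mem_filter.1 hℓ').2)
          (Finset.mem_filter.2 ⟨Finset.mem_univ ℓ, hjl⟩)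
      have h2 : (∑ ℓ' ∈ Finset.univ.filter (fun ℓ' : Fin r => j < ℓ'),
          ((f ℓ').1 * (f j).2 - (f j).1 * (f ℓ').2 + (f ℓ').1 * (f j).1 * (g - 1))) ≤
          ∑ j' : Fin r, ∑ ℓ' ∈ Finset.univ.filter (fun ℓ' : Fin r => j' < ℓ'),
          ((f ℓ').1 * (f j').2 - (f j').1 * (f ℓ').2 + (f ℓ').1 * (f j').1 * (g - 1)) :=
        Finset.single_le_sum (fun j' _ => hinner j') (Finset.mem_univ j)
      have h3 : 0 ≤ (f ℓ).1 * (f j).1 * (g - 1) :=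
        mul_nonneg (mul_nonneg (hpos ℓ).le (hpos j).le) (by linarith)
      linarith
    -- bound on each d_k
    have hdb : ∀ k : Fin r, |(f k).2| ≤ B := by
      intro k
      have habs : ∀ j : Fin r, |(f k).1 * (f j).2 - (f j).1 * (f k).2| ≤ M := by
        intro j
        rcases lt_trichotomy j k with h | h | h
        · exact abs_le.2 ⟨by linarith [hcross j k h], hcM j k h⟩
        · subst h; simp [hM, mul_comm]
        · have h1 := hcross k j h
          have h2 := hcM k j h
          rw [abs_sub_comm]
          exact abs_le.2 ⟨by linarith, h2⟩
      have hsum : (∑ j : Fin r, ((f k).1 * (f j).2 - (f j).1 * (f k).2)) =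
          (f k).1 * d - n * (f k).2 := by
        rw [Finset.sum_sub_distrib, ← Finset.mul_sum, ← Finset.sum_mul, hsn, hsd]
      have h4 : |(f k).1 * d - n * (f k).2| ≤ (r : ℤ) * M := by
        rw [← hsum]
        calc |∑ j : Fin r, ((f k).1 * (f j).2 - (f j).1 * (f k).2)|
            ≤ ∑ j : Fin r, |(f k).1 * (f j).2 - (f j).1 * (f k).2| :=
              Finset.abs_sum_le_sum_abs _ _
          _ ≤ ∑ _j : Fin r, M := Finset.sum_le_sum fun j _ => habs j
          _ = (r : ℤ) * M := by simp [mul_comm]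
      have h5 : |(f k).1 * d| ≤ n * |d| := by
        rw [abs_mul, abs_of_pos (hpos k)]
        exact mul_le_mul_of_nonneg_right (hnle k) (abs_nonneg d)
      have h6 : n * |(f k).2| ≤ n * |d| + n * M := by
        have : |n * (f k).2| ≤ |(f k).1 * d| + (r : ℤ) * M := by
          have := abs_sub_abs_le_abs_sub ((f k).1 * d) (n * (f k).2)
          have h7 := abs_sub ((f k).1 * d) (n * (f k).2)
          calc |n * (f k).2| ≤ |(f k).1 * d| + |(f k).1 * d - n * (f k).2| := by
                have := abs_sub_abs_le_abs_sub (n * (f k).2) ((f k).1 * d)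
                rw [abs_sub_comm] at this
                linarith
            _ ≤ |(f k).1 * d| + (r : ℤ) * M := by linarith
        rw [abs_mul, abs_of_pos (by linarith : (0:ℤ) < n)] at this
        have h8 : (r : ℤ) * M ≤ n * M := mul_le_mul_of_nonneg_right hrn hM
        linarith
      have h9 : |(f k).2| ≤ |d| + M :=
        le_of_mul_le_mul_left (by linarith : n * |(f k).2| ≤ n * (|d| + M)) (by linarith)
      rw [hB]
      nlinarith [mul_nonneg (by linarith : (0:ℤ) ≤ n - 1) hM]
    refine ⟨?_, fun j => ?_⟩
    · show r ≤ n.toNat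
      omega
    · show f j ∈ Set.Icc ((1 : ℤ), -B) (n, B)
      have h := hdb j
      rw [abs_le] at h
      rw [Set.mem_Icc, Prod.le_def, Prod.le_def]
      exact ⟨⟨hpos j, h.1⟩, hnle j, h.2⟩
  exact (aux_fin n.toNat _ (Set.finite_Icc _ _)).subset hsub
end

section
/- For every integer g ≥ 1, the polynomial (1 − t^2)^2 (1 + t^2) divides the polynomial (1 + t)^{2g} ( (1 + t^3)^{2g} − t^{2g} (1 + t)^{2g} ) in the polynomial ring ℤ[t]. (Hence the rational expression P_t(M(2,d)) = (1+t)^{2g}((1+t^3)^{2g} − t^{2g}(1+t)^{2g})/((1−t^2)^2(1+t^2)) is in fact a polynomial with integer coefficients.) -/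
open Polynomial

/-- For every `g ≥ 1`, `(1 − t²)²(1 + t²)` divides
`(1 + t)^{2g}((1 + t³)^{2g} − t^{2g}(1 + t)^{2g})` in `ℤ[t]`. -/
theorem stmt_6 (g : ℕ) (hg : 1 ≤ g) :
    ((1 - (Polynomial.X : Polynomial ℤ) ^ 2) ^ 2 * (1 + Polynomial.X ^ 2))
      ∣ ((1 + Polynomial.X) ^ (2 * g) *
          ((1 + Polynomial.X ^ 3) ^ (2 * g)
            - Polynomial.X ^ (2 * g) * (1 + Polynomial.X) ^ (2 * g))) := by
  have key : ((1 - (X : ℤ[X]) ^ 2) ^ 2 * (1 + X ^ 2))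
      = (1 + X ^ 3) ^ 2 - (X * (1 + X)) ^ 2 := by ring
  have h1 : (((1 + X ^ 3) ^ 2 - (X * (1 + X)) ^ 2 : ℤ[X]))
      ∣ (((1 + X ^ 3) ^ 2) ^ g - ((X * (1 + X)) ^ 2) ^ g) :=
    sub_dvd_pow_sub_pow _ _ g
  rw [key]
  have h2 : ((1 + (X : ℤ[X]) ^ 3) ^ (2 * g) - X ^ (2 * g) * (1 + X) ^ (2 * g))
      = ((1 + X ^ 3) ^ 2) ^ g - ((X * (1 + X)) ^ 2) ^ g := by
    rw [← pow_mul, ← pow_mul, mul_pow]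
  rw [h2]
  exact h1.mul_left _
end
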